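/- Suppose d ≥ V. For λ > 0 let L_λ be a minimizer of CE(L) + λ‖L‖_* over {L ∈ ℝ^{V×m} : rank(L) ≤ d}. Then lim_{λ→0} CE(L_λ) = H (the empirical entropy), and lim_{λ→0} P_F(L_λ) = L^in, where L^in is the unique element of F satisfying L^in[z,j] − L^in[z′,j] = log(p̂_{j,z}/p̂_{j,z′}) for all j ∈ {1,…,m} and all z, z′ ∈ S_j. -/

import Mathlib

open Filter Topology Matrix

noncomputable section

/-- Nuclear norm: sum of the singular values of `A`. -/
def nuclearNorm {a b : ℕ} (A : Matrix (Fin a) (Fin b) ℝ) : ℝ :=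
  ∑ i, Real.sqrt ((show (Aᵀ * A).IsHermitian by
    simpa [Matrix.conjTranspose_eq_transpose_of_trivial] using
      Matrix.isHermitian_conjTranspose_mul_self A).eigenvalues i)

/-- The NTP cross-entropy loss. -/
def CEloss {V m : ℕ} (piv : Fin m → ℝ) (p : Fin m → Fin V → ℝ)
    (L : Matrix (Fin V) (Fin m) ℝ) : ℝ :=
  - ∑ j, piv j * ∑ z ∈ Finset.univ.filter (fun z => 0 < p j z),
      p j z * Real.log (Real.exp (L z j) / ∑ v, Real.exp (L v j))

/-- The empirical entropy. -/
def entropyH {V m : ℕ} (piv : Fin m → ℝ) (p : Fin m → Fin V → ℝ) : ℝ :=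
  - ∑ j, piv j * ∑ z ∈ Finset.univ.filter (fun z => 0 < p j z),
      p j z * Real.log (p j z)

/-- The subspace `F`: span of the matrices `(e_z − e_{z'}) ẽ_jᵀ` over `j` and `z, z' ∈ S_j`. -/
def Fsub {V m : ℕ} (p : Fin m → Fin V → ℝ) : Submodule ℝ (Matrix (Fin V) (Fin m) ℝ) :=
  Submodule.span ℝ {M | ∃ j z z', 0 < p j z ∧ 0 < p j z' ∧
    M = Matrix.single z j 1 - Matrix.single z' j 1}

/-- Frobenius inner product of matrices. -/
def frobInner {a b : ℕ} (X Y : Matrix (Fin a) (Fin b) ℝ) : ℝ := ∑ i, ∑ j, X i j * Y i j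

/-!
Since `d ≥ V` the rank constraint is void, so `L_λ` minimises `CE + λ‖·‖_*` over all matrices.
The nuclear norm is nonnegative and `CE` has infimum `H` (approached by the logits
`log (p̂ + t)`, `t → 0⁺`), hence `CE(L_λ) → H`. The gap `CE - H` is a `π̂`-weighted sum of
column divergences, each of which dominates the squared Hellinger distance between `p̂_j` and the
softmax of the `j`-th column on `S_j`; so the softmax probabilities of `L_λ` converge to `p̂` on
the supports. Matrices that are constant on every `S_j` are orthogonal to `F`, so `P_F(L_λ)`
only sees the in-support log-softmax of `L_λ`, which converges to `log p̂`; by continuity of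
`P_F`, `P_F(L_λ) → P_F(log p̂) = L^in`.
-/

open Real

theorem tendsto_objective_of_penalized_minimizer {α : Type*} {g N : α → ℝ} {c : ℝ}
    {x : ℝ → α} (hN : ∀ a, 0 ≤ N a) (hc : IsGLB (Set.range g) c)
    (hmin : ∀ lam > 0, ∀ a, g (x lam) + lam * N (x lam) ≤ g a + lam * N a) :
    Tendsto (fun lam => g (x lam)) (𝓝[>] 0) (𝓝 c) := by
  refine tendsto_order.2 ⟨fun b hb => Eventually.of_forall fun lam =>
    hb.trans_le (hc.1 ⟨_, rfl⟩), fun b hb => ?_⟩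
  obtain ⟨_, ⟨a, rfl⟩, -, hab⟩ := hc.exists_between hb
  have hpen : Tendsto (fun lam : ℝ => g a + lam * N a) (𝓝 0) (𝓝 (g a)) :=
    (by fun_prop : Continuous fun lam : ℝ => g a + lam * N a).tendsto' 0 _ (by simp)
  filter_upwards [self_mem_nhdsWithin,
    nhdsWithin_le_nhds (hpen.eventually (gt_mem_nhds hab))] with lam hlam hlt
  nlinarith [hmin lam hlam a, mul_nonneg (le_of_lt hlam) (hN (x lam))]

theorem sq_sqrt_sub_sqrt_le {a q : ℝ} (ha : 0 < a) (hq : 0 < q) :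
    (√q - √a) ^ 2 ≤ a * (log a - log q) + q - a := by
  have hx := sqrt_pos.2 ha
  have hy := sqrt_pos.2 hq
  have hlog : log (√q / √a) ≤ √q / √a - 1 := log_le_sub_one_of_pos (div_pos hy hx)
  have hsplit : log a - log q = -2 * log (√q / √a) := by
    rw [log_div hy.ne' hx.ne', log_sqrt ha.le, log_sqrt hq.le]; ring
  have hmul : a * (√q / √a - 1) = √a * √q - a := by
    field_simp
    nlinarith [sq_sqrt ha.le]
  rw [hsplit]
  nlinarith [sq_sqrt ha.le, sq_sqrt hq.le]

theorem Finset.sum_sq_sqrt_sub_sqrt_le {ι : Type*} (s : Finset ι) {a q : ι → ℝ}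
    (ha : ∀ i ∈ s, 0 < a i) (hq : ∀ i ∈ s, 0 < q i) (hsa : ∑ i ∈ s, a i = 1)
    (hsq : ∑ i ∈ s, q i ≤ 1) :
    ∑ i ∈ s, (√(q i) - √(a i)) ^ 2 ≤ ∑ i ∈ s, a i * (log (a i) - log (q i)) := by
  calc ∑ i ∈ s, (√(q i) - √(a i)) ^ 2
      ≤ ∑ i ∈ s, (a i * (log (a i) - log (q i)) + q i - a i) :=
        Finset.sum_le_sum fun i hi => sq_sqrt_sub_sqrt_le (ha i hi) (hq i hi)
    _ ≤ ∑ i ∈ s, a i * (log (a i) - log (q i)) := by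
        rw [Finset.sum_sub_distrib, Finset.sum_add_distrib]; linarith

def softmax {ι : Type*} [Fintype ι] (x : ι → ℝ) (i : ι) : ℝ := exp (x i) / ∑ k, exp (x k)

section softmax
variable {ι : Type*} [Fintype ι] (x : ι → ℝ)

theorem sum_exp_pos (i : ι) : 0 < ∑ k, exp (x k) :=
  Finset.sum_pos (fun k _ => exp_pos (x k)) ⟨i, Finset.mem_univ i⟩

theorem softmax_pos (i : ι) : 0 < softmax x i := div_pos (exp_pos _) (sum_exp_pos x i)

theorem log_softmax (i : ι) : log (softmax x i) = x i - log (∑ k, exp (x k)) := by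
  rw [softmax, log_div (exp_pos _).ne' (sum_exp_pos x i).ne', log_exp]

theorem sum_softmax_le (s : Finset ι) : ∑ i ∈ s, softmax x i ≤ 1 := by
  simp only [softmax, ← Finset.sum_div]
  exact div_le_one_of_le₀ (Finset.sum_le_sum_of_subset_of_nonneg (Finset.subset_univ s)
    fun k _ _ => (exp_pos (x k)).le) (Finset.sum_nonneg fun k _ => (exp_pos (x k)).le)

end softmax

section crossEntropy
variable {V m : ℕ} {piv : Fin m → ℝ} {p : Fin m → Fin V → ℝ}

theorem CEloss_sub_entropyH (L : Matrix (Fin V) (Fin m) ℝ) :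
    CEloss piv p L - entropyH piv p = ∑ j, piv j * ∑ z ∈ Finset.univ.filter (0 < p j ·),
      p j z * (log (p j z) - log (softmax (Lᵀ j) z)) := by
  simp only [CEloss, entropyH, softmax, transpose_apply, mul_sub, Finset.sum_sub_distrib]
  ring

theorem sum_hellinger_le_CEloss_sub_entropyH (hp : ∀ j z, 0 ≤ p j z)
    (hpsum : ∀ j, ∑ z, p j z = 1) (hpiv : ∀ j, 0 ≤ piv j) (L : Matrix (Fin V) (Fin m) ℝ) :
    ∑ j, piv j * ∑ z ∈ Finset.univ.filter (0 < p j ·), (√(softmax (Lᵀ j) z) - √(p j z)) ^ 2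
      ≤ CEloss piv p L - entropyH piv p := by
  rw [CEloss_sub_entropyH]
  refine Finset.sum_le_sum fun j _ => mul_le_mul_of_nonneg_left ?_ (hpiv j)
  refine Finset.sum_sq_sqrt_sub_sqrt_le _ (fun z hz => (Finset.mem_filter.1 hz).2)
    (fun z _ => softmax_pos _ z) ?_ (sum_softmax_le (Lᵀ j) _)
  rw [Finset.sum_filter_of_ne fun z _ hz => (hp j z).lt_of_ne' hz, hpsum j]

theorem entropyH_le_CEloss (hp : ∀ j z, 0 ≤ p j z) (hpsum : ∀ j, ∑ z, p j z = 1)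
    (hpiv : ∀ j, 0 ≤ piv j) (L : Matrix (Fin V) (Fin m) ℝ) :
    entropyH piv p ≤ CEloss piv p L := by
  have hgap := sum_hellinger_le_CEloss_sub_entropyH hp hpsum hpiv L
  have hnonneg : 0 ≤ ∑ j, piv j * ∑ z ∈ Finset.univ.filter (0 < p j ·),
      (√(softmax (Lᵀ j) z) - √(p j z)) ^ 2 :=
    Finset.sum_nonneg fun j _ => mul_nonneg (hpiv j) (by positivity)
  linarith

theorem mul_sq_sqrt_softmax_sub_le (hp : ∀ j z, 0 ≤ p j z) (hpsum : ∀ j, ∑ z, p j z = 1)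
    (hpiv : ∀ j, 0 ≤ piv j) (L : Matrix (Fin V) (Fin m) ℝ) {j : Fin m} {z : Fin V}
    (hz : 0 < p j z) :
    piv j * (√(softmax (Lᵀ j) z) - √(p j z)) ^ 2 ≤ CEloss piv p L - entropyH piv p := by
  refine le_trans ?_ (sum_hellinger_le_CEloss_sub_entropyH hp hpsum hpiv L)
  refine le_trans ?_ (Finset.single_le_sum (fun j _ => mul_nonneg (hpiv j) (by positivity))
    (Finset.mem_univ j))
  gcongr
  · exact hpiv j
  exact Finset.single_le_sum (f := fun z => (√(softmax (Lᵀ j) z) - √(p j z)) ^ 2)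
    (fun _ _ => sq_nonneg _) (Finset.mem_filter.2 ⟨Finset.mem_univ z, hz⟩)

end crossEntropy

section crossEntropyLimits
variable {V m : ℕ} {piv : Fin m → ℝ} {p : Fin m → Fin V → ℝ}

theorem tendsto_softmax_of_tendsto_CEloss {α : Type*} {l : Filter α}
    {L : α → Matrix (Fin V) (Fin m) ℝ} (hp : ∀ j z, 0 ≤ p j z) (hpsum : ∀ j, ∑ z, p j z = 1)
    (hpiv : ∀ j, 0 < piv j) (hL : Tendsto (fun a => CEloss piv p (L a)) l (𝓝 (entropyH piv p)))
    {j : Fin m} {z : Fin V} (hz : 0 < p j z) :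
    Tendsto (fun a => softmax ((L a)ᵀ j) z) l (𝓝 (p j z)) := by
  have hgap : Tendsto (fun a => (CEloss piv p (L a) - entropyH piv p) / piv j) l (𝓝 0) := by
    simpa using (hL.sub_const (entropyH piv p)).div_const (piv j)
  have hsq : Tendsto (fun a => (√(softmax ((L a)ᵀ j) z) - √(p j z)) ^ 2) l (𝓝 0) :=
    squeeze_zero (fun _ => sq_nonneg _) (fun a => by
      rw [le_div_iff₀' (hpiv j)]
      exact mul_sq_sqrt_softmax_sub_le hp hpsum (fun j => (hpiv j).le) (L a) hz) hgap
  have hsqrt : Tendsto (fun a => √(softmax ((L a)ᵀ j) z)) l (𝓝 √(p j z)) := by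
    rw [tendsto_iff_norm_sub_tendsto_zero]
    simpa [sqrt_sq_eq_abs] using hsq.sqrt
  simpa [sq_sqrt (softmax_pos _ z).le, sq_sqrt hz.le] using hsqrt.pow 2

theorem tendsto_CEloss_of_tendsto_softmax {α : Type*} {l : Filter α}
    {L : α → Matrix (Fin V) (Fin m) ℝ}
    (hL : ∀ j z, 0 < p j z → Tendsto (fun a => softmax ((L a)ᵀ j) z) l (𝓝 (p j z))) :
    Tendsto (fun a => CEloss piv p (L a)) l (𝓝 (entropyH piv p)) := by
  show Tendsto (fun a => -∑ j, piv j * ∑ z ∈ Finset.univ.filter (0 < p j ·),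
    p j z * log (softmax ((L a)ᵀ j) z)) l _
  refine (tendsto_finsetSum _ fun j _ => (tendsto_finsetSum _ fun z hz => ?_).const_mul _).neg
  have hz := (Finset.mem_filter.1 hz).2
  exact ((hL j z hz).log hz.ne').const_mul _

def logShift (p : Fin m → Fin V → ℝ) (t : ℝ) : Matrix (Fin V) (Fin m) ℝ :=
  of fun z j => log (p j z + t)

theorem tendsto_softmax_logShift (hp : ∀ j z, 0 ≤ p j z) (hpsum : ∀ j, ∑ z, p j z = 1)
    (j : Fin m) (z : Fin V) :
    Tendsto (fun t => softmax ((logShift p t)ᵀ j) z) (𝓝[>] 0) (𝓝 (p j z)) := by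
  have hcont : ContinuousAt (fun t => (p j z + t) / ∑ v, (p j v + t)) 0 :=
    (continuousAt_const.add continuousAt_id).div
      (continuous_finsetSum _ fun v _ => continuous_const.add continuous_id).continuousAt
      (by simp [hpsum j])
  have hlim := hcont.tendsto
  simp only [add_zero, hpsum j, div_one] at hlim
  refine (hlim.mono_left nhdsWithin_le_nhds).congr' ?_
  filter_upwards [self_mem_nhdsWithin] with t (ht : 0 < t)
  simp [softmax, logShift, exp_log (add_pos_of_nonneg_of_pos (hp _ _) ht)]

theorem isGLB_range_CEloss (hp : ∀ j z, 0 ≤ p j z) (hpsum : ∀ j, ∑ z, p j z = 1)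
    (hpiv : ∀ j, 0 ≤ piv j) : IsGLB (Set.range (CEloss piv p)) (entropyH piv p) :=
  ⟨by rintro _ ⟨L, rfl⟩; exact entropyH_le_CEloss hp hpsum hpiv L,
    fun _ hb => ge_of_tendsto' (tendsto_CEloss_of_tendsto_softmax fun j z _ =>
      tendsto_softmax_logShift hp hpsum j z) fun _ => hb ⟨_, rfl⟩⟩

end crossEntropyLimits

theorem nuclearNorm_nonneg {a b : ℕ} (A : Matrix (Fin a) (Fin b) ℝ) : 0 ≤ nuclearNorm A :=
  Finset.sum_nonneg fun _ _ => sqrt_nonneg _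

def matrixEuclideanEquiv (V m : ℕ) :
    Matrix (Fin V) (Fin m) ℝ ≃ₗ[ℝ] EuclideanSpace ℝ (Fin V × Fin m) :=
  (LinearEquiv.curry ℝ ℝ (Fin V) (Fin m)).symm.trans (WithLp.linearEquiv 2 ℝ _).symm

theorem frobInner_eq_inner {V m : ℕ} (X Y : Matrix (Fin V) (Fin m) ℝ) :
    frobInner X Y = inner ℝ (matrixEuclideanEquiv V m X) (matrixEuclideanEquiv V m Y) := by
  simp only [PiLp.inner_apply, RCLike.inner_apply, starRingEnd_apply, star_trivial,
    Fintype.sum_prod_type, frobInner]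
  exact Finset.sum_congr rfl fun i _ => Finset.sum_congr rfl fun j _ => mul_comm _ _

theorem frobInner_single_sub_single {V m : ℕ} (X : Matrix (Fin V) (Fin m) ℝ) (z z' : Fin V)
    (j : Fin m) : frobInner X (single z j 1 - single z' j 1) = X z j - X z' j := by
  simp [frobInner, Matrix.single, ite_and, mul_sub, mul_ite, Finset.sum_sub_distrib]

section projection
variable {V m : ℕ} (p : Fin m → Fin V → ℝ)

def projFsub : Matrix (Fin V) (Fin m) ℝ →ₗ[ℝ] Matrix (Fin V) (Fin m) ℝ :=
  (matrixEuclideanEquiv V m).symm.toLinearMap ∘ₗ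
    ((Fsub p).map (matrixEuclideanEquiv V m).toLinearMap).starProjection.toLinearMap ∘ₗ
      (matrixEuclideanEquiv V m).toLinearMap

theorem projFsub_mem (X : Matrix (Fin V) (Fin m) ℝ) : projFsub p X ∈ Fsub p :=
  (Submodule.mem_map_equiv _).1 (Submodule.starProjection_apply_mem _ _)

theorem frobInner_sub_projFsub (X : Matrix (Fin V) (Fin m) ℝ) {Y : Matrix (Fin V) (Fin m) ℝ}
    (hY : Y ∈ Fsub p) : frobInner (X - projFsub p X) Y = 0 := by
  rw [frobInner_eq_inner, map_sub]
  simpa [projFsub] using Submodule.starProjection_inner_eq_zero (matrixEuclideanEquiv V m X)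
    (matrixEuclideanEquiv V m Y) (Submodule.mem_map_of_mem hY)

theorem projFsub_eq_self {X : Matrix (Fin V) (Fin m) ℝ} (hX : X ∈ Fsub p) :
    projFsub p X = X := by
  have hmem : matrixEuclideanEquiv V m X ∈ (Fsub p).map (matrixEuclideanEquiv V m).toLinearMap :=
    (Submodule.mem_map_equiv _).2 (by simpa using hX)
  simp [projFsub, Submodule.starProjection_eq_self_iff.2 hmem]

theorem projFsub_eq_zero {X : Matrix (Fin V) (Fin m) ℝ}
    (hX : ∀ j z z', 0 < p j z → 0 < p j z' → X z j = X z' j) : projFsub p X = 0 := by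
  have hker : Fsub p ≤ LinearMap.ker ((innerₛₗ ℝ (matrixEuclideanEquiv V m X)).comp
      (matrixEuclideanEquiv V m).toLinearMap) := by
    refine Submodule.span_le.2 ?_
    rintro _ ⟨j, z, z', hz, hz', rfl⟩
    rw [SetLike.mem_coe, LinearMap.mem_ker, LinearMap.comp_apply, innerₛₗ_apply_apply,
      LinearEquiv.coe_coe, ← frobInner_eq_inner, frobInner_single_sub_single, hX j z z' hz hz',
      sub_self]
  have horth : matrixEuclideanEquiv V m X ∈
      ((Fsub p).map (matrixEuclideanEquiv V m).toLinearMap)ᗮ := by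
    rintro _ ⟨Y, hY, rfl⟩
    simpa [real_inner_comm] using hker hY
  simp [projFsub, (Submodule.starProjection_apply_eq_zero_iff _).2 horth]

end projection

section supportDifferences
variable {V m : ℕ} {p : Fin m → Fin V → ℝ}

theorem projFsub_apply_sub_apply (X : Matrix (Fin V) (Fin m) ℝ) {j : Fin m} {z z' : Fin V}
    (hz : 0 < p j z) (hz' : 0 < p j z') :
    projFsub p X z j - projFsub p X z' j = X z j - X z' j := by
  have h := frobInner_sub_projFsub p X (Submodule.subset_span ⟨j, z, z', hz, hz', rfl⟩)
  rw [frobInner_single_sub_single] at h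
  simp only [Matrix.sub_apply] at h
  linarith

theorem eq_of_mem_Fsub_of_apply_sub_apply {M M' : Matrix (Fin V) (Fin m) ℝ} (hM : M ∈ Fsub p)
    (hM' : M' ∈ Fsub p)
    (h : ∀ j z z', 0 < p j z → 0 < p j z' → M z j - M z' j = M' z j - M' z' j) : M = M' := by
  have hzero : projFsub p (M - M') = 0 :=
    projFsub_eq_zero p fun j z z' hz hz' => by
      simp only [Matrix.sub_apply]; linarith [h j z z' hz hz']
  rwa [projFsub_eq_self p (Submodule.sub_mem _ hM hM'), sub_eq_zero] at hzero

def maskedLog (p Q : Fin m → Fin V → ℝ) : Matrix (Fin V) (Fin m) ℝ :=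
  of fun z j => if 0 < p j z then log (Q j z) else 0

theorem projFsub_maskedLog_softmax (L : Matrix (Fin V) (Fin m) ℝ) :
    projFsub p (maskedLog p fun j => softmax (Lᵀ j)) = projFsub p L := by
  rw [← sub_eq_zero, ← map_sub]
  refine projFsub_eq_zero p fun j z z' hz hz' => ?_
  simp [maskedLog, hz, hz', log_softmax]

theorem tendsto_maskedLog {α : Type*} {l : Filter α} {Q : α → Fin m → Fin V → ℝ}
    (hQ : ∀ j z, 0 < p j z → Tendsto (fun a => Q a j z) l (𝓝 (p j z))) :
    Tendsto (fun a => maskedLog p (Q a)) l (𝓝 (maskedLog p p)) := by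
  refine tendsto_pi_nhds.2 fun z => tendsto_pi_nhds.2 fun j => ?_
  by_cases hz : 0 < p j z
  · simpa [maskedLog, hz] using (hQ j z hz).log hz.ne'
  · simpa [maskedLog, hz] using tendsto_const_nhds

end supportDifferences

theorem stmt_4_general (V m d : ℕ)
    (piv : Fin m → ℝ) (hpiv : ∀ j, 0 < piv j)
    (p : Fin m → Fin V → ℝ) (hp : ∀ j z, 0 ≤ p j z) (hpsum : ∀ j, ∑ z, p j z = 1)
    (hdV : V ≤ d)
    (L : ℝ → Matrix (Fin V) (Fin m) ℝ)
    (hmin : ∀ lam : ℝ, 0 < lam → (L lam).rank ≤ d ∧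
        ∀ L' : Matrix (Fin V) (Fin m) ℝ, L'.rank ≤ d →
          CEloss piv p (L lam) + lam * nuclearNorm (L lam) ≤
          CEloss piv p L' + lam * nuclearNorm L') :
    Tendsto (fun lam => CEloss piv p (L lam)) (𝓝[>] (0 : ℝ)) (𝓝 (entropyH piv p)) ∧
    ∃ Lin : Matrix (Fin V) (Fin m) ℝ,
      Lin ∈ Fsub p ∧
      (∀ j z z', 0 < p j z → 0 < p j z' →
          Lin z j - Lin z' j = Real.log (p j z / p j z')) ∧
      (∀ M ∈ Fsub p, (∀ j z z', 0 < p j z → 0 < p j z' →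
          M z j - M z' j = Real.log (p j z / p j z')) → M = Lin) ∧
      ∃ P : ℝ → Matrix (Fin V) (Fin m) ℝ,
        (∀ lam : ℝ, 0 < lam →
            P lam ∈ Fsub p ∧ ∀ Y ∈ Fsub p, frobInner (L lam - P lam) Y = 0) ∧
        Tendsto P (𝓝[>] (0 : ℝ)) (𝓝 Lin) := by
  have hCE : Tendsto (fun lam => CEloss piv p (L lam)) (𝓝[>] 0) (𝓝 (entropyH piv p)) :=
    tendsto_objective_of_penalized_minimizer nuclearNorm_nonneg
      (isGLB_range_CEloss hp hpsum fun j => (hpiv j).le) fun lam hlam L' =>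
        (hmin lam hlam).2 L' ((rank_le_card_height L').trans (by simpa using hdV))
  have hLin : ∀ j z z', 0 < p j z → 0 < p j z' →
      projFsub p (maskedLog p p) z j - projFsub p (maskedLog p p) z' j = log (p j z / p j z') := by
    intro j z z' hz hz'
    simp [projFsub_apply_sub_apply _ hz hz', maskedLog, hz, hz', log_div hz.ne' hz'.ne']
  refine ⟨hCE, projFsub p (maskedLog p p), projFsub_mem p _, hLin,
    fun M hM hMdiff => eq_of_mem_Fsub_of_apply_sub_apply hM (projFsub_mem p _)
      fun j z z' hz hz' => by rw [hMdiff j z z' hz hz', hLin j z z' hz hz'],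
    fun lam => projFsub p (L lam),
    fun lam _ => ⟨projFsub_mem p _, fun _ hY => frobInner_sub_projFsub p _ hY⟩, ?_⟩
  have hsoftmax : Tendsto (fun lam => maskedLog p fun j => softmax ((L lam)ᵀ j)) (𝓝[>] 0)
      (𝓝 (maskedLog p p)) :=
    tendsto_maskedLog fun _ _ hz => tendsto_softmax_of_tendsto_CEloss hp hpsum hpiv hCE hz
  simpa only [Function.comp_def, projFsub_maskedLog_softmax] using
    ((projFsub p).continuous_of_finiteDimensional.tendsto _).comp hsoftmax

/-- with `d ≥ V`, along the regularization path `L_λ` the loss converges to the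
empirical entropy, and the orthogonal projection `P_F(L_λ)` converges to `L^in`, the unique
element of `F` whose logit differences equal the in-support log-odds. -/
theorem stmt_4 (V m d : ℕ) (hV : 2 ≤ V) (hm : 0 < m) (hd : 0 < d)
    (piv : Fin m → ℝ) (hpiv : ∀ j, 0 < piv j) (hpisum : ∑ j, piv j = 1)
    (p : Fin m → Fin V → ℝ) (hp : ∀ j z, 0 ≤ p j z) (hpsum : ∀ j, ∑ z, p j z = 1)
    (hdV : V ≤ d)
    (L : ℝ → Matrix (Fin V) (Fin m) ℝ)
    (hmin : ∀ lam : ℝ, 0 < lam → (L lam).rank ≤ d ∧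
        ∀ L' : Matrix (Fin V) (Fin m) ℝ, L'.rank ≤ d →
          CEloss piv p (L lam) + lam * nuclearNorm (L lam) ≤
          CEloss piv p L' + lam * nuclearNorm L') :
    Tendsto (fun lam => CEloss piv p (L lam)) (𝓝[>] (0 : ℝ)) (𝓝 (entropyH piv p)) ∧
    ∃ Lin : Matrix (Fin V) (Fin m) ℝ,
      Lin ∈ Fsub p ∧
      (∀ j z z', 0 < p j z → 0 < p j z' →
          Lin z j - Lin z' j = Real.log (p j z / p j z')) ∧
      (∀ M ∈ Fsub p, (∀ j z z', 0 < p j z → 0 < p j z' →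
          M z j - M z' j = Real.log (p j z / p j z')) → M = Lin) ∧
      ∃ P : ℝ → Matrix (Fin V) (Fin m) ℝ,
        (∀ lam : ℝ, 0 < lam →
            P lam ∈ Fsub p ∧ ∀ Y ∈ Fsub p, frobInner (L lam - P lam) Y = 0) ∧
        Tendsto P (𝓝[>] (0 : ℝ)) (𝓝 Lin) :=
  stmt_4_general V m d piv hpiv p hp hpsum hdV L hmin
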